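/- Let k be even and G = G_0(u) ⋄ H(u) be a connected k-uniform hypergraph. If x is a first eigenvector of G with x_u = 0 and the restriction x|_{G_0} not identically zero, then λ_min(G_0) = λ_min(G), and x|_{G_0} is a first eigenvector of G_0. -/

import Mathlib

open Finset BigOperators

variable {V : Type*}

/-- A `k`-uniform hypergraph given by its edge set: every edge has exactly `k` vertices. -/
def Uniform [DecidableEq V] (E : Finset (Finset V)) (k : ℕ) : Prop :=
  ∀ e ∈ E, e.card = k

/-- Two vertices are adjacent if some edge contains both. -/
def HAdj [DecidableEq V] (E : Finset (Finset V)) (a b : V) : Prop :=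
  a ≠ b ∧ ∃ e ∈ E, a ∈ e ∧ b ∈ e

/-- The hypergraph is connected: every two vertices are joined by a walk. -/
def HConnected [DecidableEq V] (E : Finset (Finset V)) : Prop :=
  ∀ a b : V, Relation.ReflTransGen (HAdj E) a b

/-- `(lam, x)` satisfies the H-eigen equations of the adjacency tensor:
for each vertex `v`, `∑_{e ∋ v} ∏_{w ∈ e \ {v}} x w = lam * (x v)^(k-1)`. -/
def isEig [Fintype V] [DecidableEq V] (E : Finset (Finset V)) (k : ℕ) (lam : ℝ) (x : V → ℝ) :
    Prop :=
  ∀ v : V, (∑ e ∈ E.filter (fun e => v ∈ e), ∏ w ∈ e.erase v, x w) = lam * x v ^ (k - 1)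

/-- The set of H-eigenvalues of the adjacency tensor of the hypergraph. -/
def specH [Fintype V] [DecidableEq V] (E : Finset (Finset V)) (k : ℕ) : Set ℝ :=
  {lam | ∃ x : V → ℝ, x ≠ 0 ∧ isEig E k lam x}

/-- The least H-eigenvalue of the adjacency tensor. -/
noncomputable def lamMin [Fintype V] [DecidableEq V] (E : Finset (Finset V)) (k : ℕ) : ℝ :=
  sInf (specH E k)

/-- A first eigenvector: a real eigenvector associated with the least H-eigenvalue. -/
def IsFirstEigvec [Fintype V] [DecidableEq V] (E : Finset (Finset V)) (k : ℕ) (x : V → ℝ) :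
    Prop :=
  x ≠ 0 ∧ isEig E k (lamMin E k) x

/-!
For even `k` the least H-eigenvalue is the minimum of the Rayleigh quotient
`k F(z) / ∑ᵥ z_v^k`, where `F(z) = ∑ₑ ∏_{w ∈ e} z_w`, and every minimiser is an eigenvector.
Split `x` into its part `y` on `G₀` and its part `w` off `G₀`, and write `N(z) = ∑ᵥ z_v^k`.
Since `x_u = 0`, every edge sees only one of `y`, `w`, so
`λ(G) (N(y) + N(w)) = k F₀(y) + k F_H(w) ≥ λ(G₀) N(y) + λ(H) N(w)`. Restricting first
eigenvectors of `G₀` and `H` to their own vertex sets shows `λ(G) ≤ λ(G₀), λ(H)`, so equality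
holds throughout: `λ(G₀) = λ(G)` and `y` minimises the Rayleigh quotient of `G₀`.
-/

section EdgeForm

/-- `k * edgeForm E z` is `𝒜 z^k` for the adjacency tensor normalised as in `isEig`, and
`adjApply E z v` below is `(𝒜 z^{k-1})_v`. -/
def edgeForm (E : Finset (Finset V)) (z : V → ℝ) : ℝ := ∑ e ∈ E, ∏ w ∈ e, z w

theorem continuous_edgeForm (E : Finset (Finset V)) : Continuous (edgeForm E) := by
  unfold edgeForm
  fun_prop

theorem edgeForm_congr {E : Finset (Finset V)} {z z' : V → ℝ}
    (h : ∀ e ∈ E, ∀ v ∈ e, z v = z' v) : edgeForm E z = edgeForm E z' :=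
  sum_congr rfl fun e he => prod_congr rfl (h e he)

theorem edgeForm_eq_zero {E : Finset (Finset V)} {z : V → ℝ} (h : ∀ e ∈ E, ∃ v ∈ e, z v = 0) :
    edgeForm E z = 0 :=
  sum_eq_zero fun e he => let ⟨_, hv, hzv⟩ := h e he; prod_eq_zero hv hzv

theorem edgeForm_union [DecidableEq V] {A B : Finset (Finset V)} (h : Disjoint A B)
    (z : V → ℝ) : edgeForm (A ∪ B) z = edgeForm A z + edgeForm B z :=
  sum_union h

theorem edgeForm_smul [DecidableEq V] {E : Finset (Finset V)} {k : ℕ} (hU : Uniform E k)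
    (s : ℝ) (z : V → ℝ) : edgeForm E (s • z) = s ^ k * edgeForm E z := by
  rw [edgeForm, edgeForm, mul_sum]
  refine sum_congr rfl fun e he => ?_
  simp only [Pi.smul_apply, smul_eq_mul, prod_mul_distrib, prod_const, hU e he]

end EdgeForm

section PowSum

variable [Fintype V]

def powSum (k : ℕ) (z : V → ℝ) : ℝ := ∑ v, z v ^ k

theorem powSum_nonneg {k : ℕ} (hk : Even k) (z : V → ℝ) : 0 ≤ powSum k z :=
  sum_nonneg fun v _ => hk.pow_nonneg (z v)

theorem powSum_pos {k : ℕ} (hk : Even k) {z : V → ℝ} (hz : z ≠ 0) : 0 < powSum k z :=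
  let ⟨v, hv⟩ := Function.ne_iff.1 hz
  sum_pos' (fun w _ => hk.pow_nonneg (z w)) ⟨v, mem_univ v, hk.pow_pos hv⟩

theorem powSum_smul (k : ℕ) (s : ℝ) (z : V → ℝ) : powSum k (s • z) = s ^ k * powSum k z := by
  simp only [powSum, mul_sum, Pi.smul_apply, smul_eq_mul, mul_pow]

theorem isCompact_powSum_eq_one (hk : Even k) (hk0 : k ≠ 0) :
    IsCompact {z : V → ℝ | powSum k z = 1} := by
  refine Metric.isCompact_of_isClosed_isBounded
    (isClosed_eq (by unfold powSum; fun_prop) continuous_const)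
    ((Metric.isBounded_closedBall (x := 0) (r := 1)).subset fun z hz => ?_)
  rw [Metric.mem_closedBall, dist_zero_right, pi_norm_le_iff_of_nonneg zero_le_one]
  intro v
  rw [Real.norm_eq_abs, ← pow_le_one_iff_of_nonneg (abs_nonneg _) hk0, hk.pow_abs, ← hz.out]
  exact single_le_sum (fun w _ => hk.pow_nonneg (z w)) (mem_univ v)

variable [DecidableEq V]

theorem powSum_single {k : ℕ} (hk0 : k ≠ 0) (v : V) : powSum k (Pi.single v 1) = 1 := by
  simp [powSum, Pi.single_apply, ite_pow, zero_pow hk0]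

theorem powSum_update (k : ℕ) (z : V → ℝ) (v : V) (t : ℝ) :
    powSum k (Function.update z v t) = powSum k z - z v ^ k + t ^ k := by
  rw [powSum, powSum, ← add_sum_erase _ _ (mem_univ v), ← add_sum_erase _ _ (mem_univ v),
    Function.update_self, sum_congr rfl fun w hw => by
      rw [Function.update_of_ne (ne_of_mem_erase hw)]]
  ring

theorem powSum_ite_add_powSum_ite {k : ℕ} (hk0 : k ≠ 0) (W : Finset V) (z : V → ℝ) :
    powSum k (fun v => if v ∈ W then z v else 0) + powSum k (fun v => if v ∈ W then 0 else z v) =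
      powSum k z := by
  rw [powSum, powSum, powSum, ← sum_add_distrib]
  refine sum_congr rfl fun v _ => ?_
  split_ifs <;> simp [zero_pow hk0]

end PowSum

section Eigen

variable [DecidableEq V]

def adjApply (E : Finset (Finset V)) (z : V → ℝ) (v : V) : ℝ :=
  ∑ e ∈ E.filter (fun e => v ∈ e), ∏ w ∈ e.erase v, z w

theorem edgeForm_update (E : Finset (Finset V)) (z : V → ℝ) (v : V) (t : ℝ) :
    edgeForm E (Function.update z v t) =
      edgeForm (E.filter (fun e => v ∉ e)) z + t * adjApply E z v := by
  rw [edgeForm, ← sum_filter_not_add_sum_filter E (fun e => v ∈ e), adjApply, mul_sum]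
  congr 1
  · exact sum_congr rfl fun e he => prod_congr rfl fun w hw =>
      Function.update_of_ne (ne_of_mem_of_not_mem hw (mem_filter.1 he).2) t z
  · refine sum_congr rfl fun e he => ?_
    rw [← mul_prod_erase e _ (mem_filter.1 he).2, Function.update_self]
    exact congrArg _ (prod_congr rfl fun w hw => Function.update_of_ne (ne_of_mem_erase hw) t z)

variable [Fintype V] {E : Finset (Finset V)} {k : ℕ}

theorem sum_mul_adjApply (hU : Uniform E k) (z : V → ℝ) :
    ∑ v, z v * adjApply E z v = k * edgeForm E z := by
  calc ∑ v, z v * adjApply E z v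
      = ∑ v, ∑ e ∈ E, if v ∈ e then z v * ∏ w ∈ e.erase v, z w else 0 := by
        simp only [adjApply, mul_sum, sum_filter, mul_ite, mul_zero]
    _ = ∑ e ∈ E, ∑ v ∈ e, z v * ∏ w ∈ e.erase v, z w := by
        rw [sum_comm]
        simp only [sum_ite_mem, univ_inter]
    _ = k * edgeForm E z := by
        rw [edgeForm, mul_sum]
        refine sum_congr rfl fun e he => ?_
        rw [sum_congr rfl fun v hv => mul_prod_erase e z hv, sum_const, hU e he, nsmul_eq_mul]

theorem isEig.mul_powSum {lam : ℝ} {z : V → ℝ} (hz : isEig E k lam z) (hk0 : 0 < k)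
    (hU : Uniform E k) : lam * powSum k z = k * edgeForm E z := by
  rw [← sum_mul_adjApply hU, powSum, mul_sum]
  refine sum_congr rfl fun v _ => ?_
  rw [adjApply, hz v, mul_left_comm, ← pow_succ', Nat.sub_add_cancel hk0]

/-- The partial derivative of `k F(z) - μ ∑ᵥ z_v^k` in the coordinate `v` is
`k (adjApply E z v - μ z_v^(k-1))`, and it vanishes at a minimiser. -/
theorem isEig_of_forall_le (hk0 : 0 < k) {mu : ℝ}
    (hmin : ∀ z : V → ℝ, mu * powSum k z ≤ k * edgeForm E z) {z : V → ℝ}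
    (hz : k * edgeForm E z = mu * powSum k z) : isEig E k mu z := by
  intro v
  change adjApply E z v = mu * z v ^ (k - 1)
  set C := edgeForm (E.filter (fun e => v ∉ e)) z
  set S := adjApply E z v
  have hFz : edgeForm E z = C + z v * S := by
    simpa only [Function.update_eq_self] using edgeForm_update E z v (z v)
  have hloc : IsLocalMin (fun t => k * (C + t * S) - mu * (powSum k z - z v ^ k + t ^ k)) (z v) :=
    Filter.Eventually.of_forall fun t => by
      have h := hmin (Function.update z v t)
      rw [edgeForm_update, powSum_update] at h
      dsimp only
      rw [← hFz, hz]
      linarith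
  have hC : HasDerivAt (fun t => k * (C + t * S)) (k * (1 * S)) (z v) :=
    (((hasDerivAt_id' (z v)).mul_const S).const_add C).const_mul (k : ℝ)
  have hN : HasDerivAt (fun t => mu * (powSum k z - z v ^ k + t ^ k))
      (mu * (k * z v ^ (k - 1))) (z v) :=
    ((hasDerivAt_pow k (z v)).const_add _).const_mul mu
  have hzero := hloc.hasDerivAt_eq_zero (hC.sub hN)
  have hk : (k : ℝ) ≠ 0 := Nat.cast_ne_zero.2 hk0.ne'
  exact mul_left_cancel₀ hk (by linear_combination hzero)

end Eigen

section Variational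

variable [Fintype V] [DecidableEq V] {E : Finset (Finset V)} {k : ℕ}

theorem exists_forall_powSum_eq_one_edgeForm_le [Nonempty V] (E : Finset (Finset V))
    (hk : Even k) (hk0 : k ≠ 0) :
    ∃ z : V → ℝ, powSum k z = 1 ∧ ∀ z', powSum k z' = 1 → edgeForm E z ≤ edgeForm E z' := by
  obtain ⟨v⟩ := ‹Nonempty V›
  obtain ⟨z, hz, hmin⟩ := (isCompact_powSum_eq_one hk hk0).exists_isMinOn
    ⟨Pi.single v 1, powSum_single hk0 v⟩ (continuous_edgeForm E).continuousOn
  exact ⟨z, hz, fun z' hz' => hmin hz'⟩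

/-- Both `F` and `∑ᵥ z_v^k` are homogeneous of degree `k`, so it suffices to compare on the
sphere `∑ᵥ z_v^k = 1`. -/
theorem mul_powSum_le_of_forall_powSum_eq_one (hk : Even k) (hk0 : 0 < k) (hU : Uniform E k)
    {z₀ : V → ℝ} (hmin : ∀ z, powSum k z = 1 → edgeForm E z₀ ≤ edgeForm E z) (z : V → ℝ) :
    k * edgeForm E z₀ * powSum k z ≤ k * edgeForm E z := by
  rcases eq_or_ne z 0 with rfl | hz
  · have h0 : edgeForm E (0 : V → ℝ) = 0 := edgeForm_eq_zero fun e he =>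
      let ⟨v, hv⟩ := card_pos.1 (hU e he ▸ hk0 : 0 < e.card)
      ⟨v, hv, rfl⟩
    simp [h0, powSum, zero_pow hk0.ne']
  have hN := powSum_pos hk hz
  set r := powSum k z ^ (k⁻¹ : ℝ)
  have hr : 0 < r := Real.rpow_pos_of_pos hN _
  have hrk : r ^ k = powSum k z := by
    rw [← Real.rpow_natCast, ← Real.rpow_mul hN.le, inv_mul_cancel₀ (by positivity),
      Real.rpow_one]
  have hz' : z = r • (r⁻¹ • z) := by rw [smul_smul, mul_inv_cancel₀ hr.ne', one_smul]
  have h1 := hmin (r⁻¹ • z) (by rw [powSum_smul, inv_pow, hrk, inv_mul_cancel₀ hN.ne'])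
  rw [hz', edgeForm_smul hU, hrk, ← hz']
  have := mul_le_mul_of_nonneg_left h1 (by positivity : (0 : ℝ) ≤ k * powSum k z)
  linarith

theorem exists_mem_specH_forall_mul_powSum_le [Nonempty V] (hk : Even k) (hk0 : 0 < k)
    (hU : Uniform E k) :
    ∃ mu ∈ specH E k, ∀ z, mu * powSum k z ≤ k * edgeForm E z := by
  obtain ⟨z₀, hz₀, hmin⟩ := exists_forall_powSum_eq_one_edgeForm_le E hk hk0.ne'
  have hbound := mul_powSum_le_of_forall_powSum_eq_one hk hk0 hU hmin
  refine ⟨k * edgeForm E z₀, ⟨z₀, ?_, isEig_of_forall_le hk0 hbound (by rw [hz₀, mul_one])⟩,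
    hbound⟩
  rintro rfl
  simp [powSum, zero_pow hk0.ne'] at hz₀

theorem lamMin_eq_of_forall_mul_powSum_le (hk : Even k) (hk0 : 0 < k) (hU : Uniform E k)
    {mu : ℝ} (hmem : mu ∈ specH E k) (hbound : ∀ z, mu * powSum k z ≤ k * edgeForm E z) :
    lamMin E k = mu := by
  refine IsLeast.csInf_eq ⟨hmem, ?_⟩
  rintro lam ⟨z, hz, hlam⟩
  refine le_of_mul_le_mul_right ?_ (powSum_pos hk hz)
  exact (hbound z).trans_eq (hlam.mul_powSum hk0 hU).symm

theorem lamMin_mem_specH [Nonempty V] (hk : Even k) (hk0 : 0 < k) (hU : Uniform E k) :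
    lamMin E k ∈ specH E k := by
  obtain ⟨mu, hmem, hbound⟩ := exists_mem_specH_forall_mul_powSum_le hk hk0 hU
  rwa [lamMin_eq_of_forall_mul_powSum_le hk hk0 hU hmem hbound]

theorem lamMin_mul_powSum_le [Nonempty V] (hk : Even k) (hk0 : 0 < k) (hU : Uniform E k)
    (z : V → ℝ) : lamMin E k * powSum k z ≤ k * edgeForm E z := by
  obtain ⟨mu, hmem, hbound⟩ := exists_mem_specH_forall_mul_powSum_le hk hk0 hU
  rw [lamMin_eq_of_forall_mul_powSum_le hk hk0 hU hmem hbound]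
  exact hbound z

theorem lamMin_nonpos [Nonempty V] (hk : Even k) (hk1 : 1 < k) (hU : Uniform E k) :
    lamMin E k ≤ 0 := by
  obtain ⟨v⟩ := ‹Nonempty V›
  have h := lamMin_mul_powSum_le hk (by omega) hU (Pi.single v 1)
  rwa [powSum_single (by omega), mul_one, edgeForm_eq_zero fun e he => ?_, mul_zero] at h
  obtain ⟨w, hw, hwv⟩ := exists_mem_ne (hU e he ▸ hk1 : 1 < e.card) v
  exact ⟨w, hw, Pi.single_eq_of_ne hwv 1⟩

end Variational

section Coalescence

theorem disjoint_of_forall_subset_of_forall_exists_notMem {A B : Finset (Finset V)} {W : Finset V}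
    (hA : ∀ e ∈ A, e ⊆ W) (hB : ∀ e ∈ B, ∃ v ∈ e, v ∉ W) : Disjoint A B :=
  disjoint_left.2 fun e heA heB =>
    let ⟨_, hv, hvW⟩ := hB e heB
    hvW (hA e heA hv)

variable [DecidableEq V]

theorem exists_mem_notMem_of_inter_subset_singleton {V₁ V₂ : Finset V} {u : V}
    (hI : V₁ ∩ V₂ ⊆ {u}) {e : Finset V} (he : e ⊆ V₂) (hcard : 1 < e.card) :
    ∃ v ∈ e, v ∉ V₁ := by
  obtain ⟨v, hv, hvu⟩ := exists_mem_ne hcard u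
  exact ⟨v, hv, fun hv₁ => hvu (mem_singleton.1 (hI (mem_inter.2 ⟨hv₁, he hv⟩)))⟩

theorem edgeForm_coalescence {V₀ V₁ : Finset V} {u : V} (hI : V₀ ∩ V₁ ⊆ {u})
    {E₀ E₁ : Finset (Finset V)} (hE₀ : ∀ e ∈ E₀, e ⊆ V₀) (hE₁ : ∀ e ∈ E₁, e ⊆ V₁)
    (hdisj : Disjoint E₀ E₁) {x : V → ℝ} (hxu : x u = 0) :
    edgeForm (E₀ ∪ E₁) x = edgeForm E₀ (fun v => if v ∈ V₀ then x v else 0) +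
      edgeForm E₁ (fun v => if v ∈ V₀ then 0 else x v) := by
  rw [edgeForm_union hdisj]
  congr 1 <;> refine edgeForm_congr fun e he v hv => ?_
  · exact (if_pos (hE₀ e he hv)).symm
  · split_ifs with hv₀
    · rwa [mem_singleton.1 (hI (mem_inter.2 ⟨hv₀, hE₁ e he hv⟩))]
    · rfl

variable [Fintype V] {k : ℕ}

/-- The restriction `z'` to `W` of a first eigenvector `z` of `A` kills the edges of `B`, so
`λ(A ∪ B) N(z') ≤ k F_A(z) = λ(A) N(z)` with `N(z') ≤ N(z)`; as `λ(A ∪ B) ≤ 0`, this forces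
`λ(A ∪ B) ≤ λ(A)`. -/
theorem lamMin_union_le [Nonempty V] {A B : Finset (Finset V)} {W : Finset V} (hk : Even k)
    (hk1 : 1 < k) (hU : Uniform (A ∪ B) k) (hA : ∀ e ∈ A, e ⊆ W)
    (hB : ∀ e ∈ B, ∃ v ∈ e, v ∉ W) : lamMin (A ∪ B) k ≤ lamMin A k := by
  have hk0 : 0 < k := by omega
  have hUA : Uniform A k := fun e he => hU e (mem_union_left B he)
  obtain ⟨z, hz, hzeig⟩ := lamMin_mem_specH hk hk0 hUA
  set z' : V → ℝ := fun v => if v ∈ W then z v else 0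
  have hF : edgeForm (A ∪ B) z' = edgeForm A z := by
    rw [edgeForm_union (disjoint_of_forall_subset_of_forall_exists_notMem hA hB),
      edgeForm_eq_zero (E := B) fun e he => ?_, add_zero]
    · exact edgeForm_congr fun e he v hv => if_pos (hA e he hv)
    · obtain ⟨v, hv, hvW⟩ := hB e he
      exact ⟨v, hv, if_neg hvW⟩
  have hN : powSum k z' ≤ powSum k z := sum_le_sum fun v _ => by
    by_cases hv : v ∈ W
    · simp [z', hv]
    · simpa [z', hv, zero_pow hk0.ne'] using hk.pow_nonneg (z v)
  have hbound := lamMin_mul_powSum_le hk hk0 hU z'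
  rw [hF, ← hzeig.mul_powSum hk0 hUA] at hbound
  have hNz := powSum_pos hk hz
  have hNz' := powSum_nonneg hk z'
  have hlam := lamMin_nonpos hk hk1 hU
  nlinarith

end Coalescence

theorem stmt9_general [Fintype V] [DecidableEq V]
    (V0 VH : Finset V) (u : V) (E0 EH : Finset (Finset V)) (k : ℕ)
    (hk : Even k) (hk0 : 0 < k)
    (hI : V0 ∩ VH = {u})
    (hE0 : ∀ e ∈ E0, e ⊆ V0) (hEH : ∀ e ∈ EH, e ⊆ VH)
    (hU : Uniform (E0 ∪ EH) k)
    (x : V → ℝ) (hx : IsFirstEigvec (E0 ∪ EH) k x) (hxu : x u = 0)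
    (hres : ∃ v ∈ V0, x v ≠ 0) :
    lamMin E0 k = lamMin (E0 ∪ EH) k ∧
    IsFirstEigvec E0 k (fun v => if v ∈ V0 then x v else 0) := by
  have : Nonempty V := ⟨u⟩
  have hk1 : 1 < k := by obtain ⟨m, rfl⟩ := hk; omega
  have hU0 : Uniform E0 k := fun e he => hU e (mem_union_left EH he)
  have hUH : Uniform EH k := fun e he => hU e (mem_union_right E0 he)
  have hEH' : ∀ e ∈ EH, ∃ v ∈ e, v ∉ V0 := fun e he =>
    exists_mem_notMem_of_inter_subset_singleton hI.le (hEH e he) (hUH e he ▸ hk1)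
  have hE0' : ∀ e ∈ E0, ∃ v ∈ e, v ∉ VH := fun e he =>
    exists_mem_notMem_of_inter_subset_singleton (inter_comm VH V0 ▸ hI.le) (hE0 e he)
      (hU0 e he ▸ hk1)
  have hle0 := lamMin_union_le hk hk1 hU hE0 hEH'
  have hleH := union_comm E0 EH ▸ lamMin_union_le hk hk1 (union_comm E0 EH ▸ hU) hEH hE0'
  have hF := edgeForm_coalescence hI.le hE0 hEH
    (disjoint_of_forall_subset_of_forall_exists_notMem hE0 hEH') hxu
  have hN := powSum_ite_add_powSum_ite hk0.ne' V0 x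
  set y : V → ℝ := fun v => if v ∈ V0 then x v else 0
  set w : V → ℝ := fun v => if v ∈ V0 then 0 else x v
  have hy : y ≠ 0 := fun h => by
    obtain ⟨v, hv, hxv⟩ := hres
    exact hxv (by simpa [y, hv] using congrFun h v)
  have hNy := powSum_pos hk hy
  have hsplit := hx.2.mul_powSum hk0 hU
  rw [hF, ← hN] at hsplit
  have hy0 := (mul_le_mul_of_nonneg_right hle0 hNy.le).trans (lamMin_mul_powSum_le hk hk0 hU0 y)
  have hwH := (mul_le_mul_of_nonneg_right hleH (powSum_nonneg hk w)).trans
    (lamMin_mul_powSum_le hk hk0 hUH w)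
  have hFy : k * edgeForm E0 y = lamMin (E0 ∪ EH) k * powSum k y := by linarith
  have hmu : lamMin E0 k = lamMin (E0 ∪ EH) k :=
    le_antisymm (le_of_mul_le_mul_right (hFy ▸ lamMin_mul_powSum_le hk hk0 hU0 y) hNy) hle0
  exact ⟨hmu, hy, isEig_of_forall_le hk0 (lamMin_mul_powSum_le hk hk0 hU0) (hmu ▸ hFy)⟩

/-- If `x` is a first eigenvector of `G = G₀(u) ⋄ H(u)` with `x u = 0` and `x|_{G₀} ≠ 0`, then `λ_min(G₀) = λ_min(G)` and `x|_{G₀}` is a first eigenvector of `G₀`. -/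
theorem stmt9 [Fintype V] [DecidableEq V]
    (V0 VH : Finset V) (u : V) (E0 EH : Finset (Finset V)) (k : ℕ)
    (hk : Even k) (hk0 : 0 < k)
    (hI : V0 ∩ VH = {u}) (hcover : V0 ∪ VH = Finset.univ)
    (hE0 : ∀ e ∈ E0, e ⊆ V0) (hEH : ∀ e ∈ EH, e ⊆ VH)
    (hU : Uniform (E0 ∪ EH) k) (hconn : HConnected (E0 ∪ EH))
    (hE0ne : E0.Nonempty) (hEHne : EH.Nonempty)
    (x : V → ℝ) (hx : IsFirstEigvec (E0 ∪ EH) k x) (hxu : x u = 0)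
    (hres : ∃ v ∈ V0, x v ≠ 0) :
    lamMin E0 k = lamMin (E0 ∪ EH) k ∧
    IsFirstEigvec E0 k (fun v => if v ∈ V0 then x v else 0) :=
  stmt9_general V0 VH u E0 EH k hk hk0 hI hE0 hEH hU x hx hxu hres
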